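/- arXiv:1808.09388 — 3 statements merged into one kernel-verified Lean document; each statement's English description precedes it below -/
import Mathlib

section
/- Let (U, U^ι) be a quantum symmetric pair of finite type, (M, B^ι) a based U^ι-module and (N, B) a finite-dimensional based U-module. The set B^ι ◇_ι B := { b₁ ◇_ι b₂ | b₁ ∈ B^ι, b₂ ∈ B } forms a ℚ(q)-basis for M ⊗ N, a ℤ[q,q^{-1}]-basis for the tensor product of the integral forms _A M ⊗_A _A N, and a ℤ[q^{-1}]-basis for the lattice 𝓛(M) ⊗_{ℤ[q^{-1}]} 𝓛(N) (the ι-canonical basis of M ⊗ N). -/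
/-!
`Θ^ι_0 = 1` and `Θ^ι_μ` raises the `N`-weight by `μ ≥ 0`, so in the standard basis `B^ι ⊗ B`
the matrix `R` of `ψ_ι` is unitriangular for the height of the `N`-weight and `det R = 1`.
The matrix `A` of the family `b₁ ◇_ι b₂` satisfies `A = R · bar(A)` by `ψ_ι`-invariance, so
`det A` is bar-invariant; it is also `≡ 1` modulo `q⁻¹ℤ[q⁻¹]`, because `A` is, and the only
bar-invariant element of `1 + q⁻¹ℤ[q⁻¹]` is `1`. Hence `A` and `A⁻¹ = adj A` both have entries
in `ℤ[q⁻¹] ⊆ ℤ[q, q⁻¹]`, which gives all three basis statements.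
-/

open scoped TensorProduct

noncomputable section

/-- The base field `ℚ(q)`. -/
abbrev Fq : Type := RatFunc ℚ

/-- The variable `q ∈ ℚ(q)`. -/
def qq : Fq := RatFunc.X

/-- The subring `ℤ[q⁻¹] ⊆ ℚ(q)`. -/
def ZqInv : Subring Fq := Subring.closure {qq⁻¹}

/-- The set `q⁻¹ ℤ[q⁻¹] ⊆ ℚ(q)`. -/
def qInvZqInv : Set Fq := {x | ∃ y ∈ ZqInv, x = qq⁻¹ * y}

/-- The subring `ℤ[q, q⁻¹] ⊆ ℚ(q)`. -/
def LaurentZ : Subring Fq := Subring.closure {qq, qq⁻¹}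

/-- The partial order on the weight lattice `X`: `μ' < μ` iff `μ' - μ ∈ ℕ𝕀` is nonzero. -/
def wtLT {I : Type} (μ' μ : I →₀ ℤ) : Prop := (∀ i, μ i ≤ μ' i) ∧ μ' ≠ μ

namespace Matrix

variable {R n : Type*} [CommRing R] [Fintype n]

theorem mulVec_mem_subring (S : Subring R) {A : Matrix n n R} (hA : ∀ i j, A i j ∈ S)
    {u : n → R} (hu : ∀ j, u j ∈ S) (i : n) : (A *ᵥ u) i ∈ S :=
  Subring.sum_mem _ fun j _ => mul_mem (hA i j) (hu j)

variable [DecidableEq n]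

theorem det_sub_det_mem_of_sub_mem (J : Ideal R) {A B : Matrix n n R}
    (h : ∀ i j, A i j - B i j ∈ J) : A.det - B.det ∈ J := by
  have hAB : (Ideal.Quotient.mk J).mapMatrix A = (Ideal.Quotient.mk J).mapMatrix B := by
    ext i j
    exact Ideal.Quotient.mk_eq_mk_iff_sub_mem _ _ |>.2 (h i j)
  rw [← Ideal.Quotient.mk_eq_mk_iff_sub_mem, RingHom.map_det, RingHom.map_det, hAB]

theorem adjugate_mem_subring (S : Subring R) {A : Matrix n n R} (hA : ∀ i j, A i j ∈ S)
    (i j : n) : A.adjugate i j ∈ S := by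
  let A' : Matrix n n S := fun i j => ⟨A i j, hA i j⟩
  rw [show A = S.subtype.mapMatrix A' from rfl, ← RingHom.map_adjugate]
  exact (A'.adjugate i j).2

theorem det_eq_one_of_lt_of_ne_zero {α : Type*} [LinearOrder α] (A : Matrix n n R) (g : n → α)
    (hdiag : ∀ i, A i i = 1) (hlt : ∀ i j, i ≠ j → A i j ≠ 0 → g j < g i) : A.det = 1 := by
  have hoff : ∀ i j, i ≠ j → g i ≤ g j → A i j = 0 := fun i j hij hle =>
    by_contra fun h => (hlt i j hij h).not_ge hle
  have hA : A.BlockTriangular (OrderDual.toDual ∘ g) := fun {i j} hij =>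
    hoff i j (fun e => by subst e; exact lt_irrefl _ hij) hij.le
  rw [hA.det]
  refine Finset.prod_eq_one fun k _ => ?_
  have : A.toSquareBlock (OrderDual.toDual ∘ g) k = 1 := by
    ext ⟨i, hi⟩ ⟨j, hj⟩
    by_cases hij : i = j
    · subst hij; simp [toSquareBlock_def, hdiag]
    · simp [toSquareBlock_def, hij, hoff i j hij (le_of_eq (hi.trans hj.symm))]
  rw [this, det_one]

end Matrix

namespace Module.Basis

variable {ι K V : Type*} [CommRing K] [AddCommGroup V] [Module K V] [DecidableEq ι]

theorem toMatrix_sub_one_apply (b : Basis ι K V) (v : ι → V) (i j : ι) :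
    b.toMatrix v i j - (1 : Matrix ι ι K) i j = b.repr (v j - b j) i := by
  rw [toMatrix_apply, map_sub, Finsupp.sub_apply, b.repr_self, Finsupp.single_apply,
    Matrix.one_apply]
  simp only [eq_comm]

variable [Fintype ι]

theorem toMatrix_semilinearMap_comp (b : Basis ι K V) {σ : K →+* K} (f : V →ₛₗ[σ] V)
    (v : ι → V) : b.toMatrix (f ∘ v) = b.toMatrix (f ∘ b) * σ.mapMatrix (b.toMatrix v) := by
  ext i j
  rw [toMatrix_apply, Function.comp_apply]
  conv_lhs => rw [← b.sum_repr (v j)]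
  simp only [map_sum, map_smulₛₗ, Finsupp.coe_finsetSum, Finset.sum_apply, Finsupp.coe_smul,
    Pi.smul_apply, smul_eq_mul, Matrix.mul_apply, toMatrix_apply, RingHom.mapMatrix_apply,
    Matrix.map_apply, Function.comp_apply, RingHom.id_apply, mul_comm]

theorem det_eq_det_mul_map_det_of_semilinearMap (b : Basis ι K V) {σ : K →+* K}
    (f : V →ₛₗ[σ] V) {v : ι → V} (hv : ∀ j, f (v j) = v j) :
    b.det v = (b.toMatrix (f ∘ b)).det * σ (b.det v) := by
  calc b.det v = (b.toMatrix (f ∘ v)).det := by rw [det_apply, show f ∘ v = v from funext hv]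
    _ = _ := by rw [toMatrix_semilinearMap_comp, Matrix.det_mul, det_apply, RingHom.map_det]

theorem forall_repr_mem_iff_exists_sum (b : Basis ι K V) {v : ι → V} (S : Subring K)
    (hv : ∀ i j, b.toMatrix v i j ∈ S) (hdet : b.det v = 1) (x : V) :
    (∀ i, b.repr x i ∈ S) ↔ ∃ c : ι →₀ K, (∀ i, c i ∈ S) ∧ x = c.sum fun i a => a • v i := by
  obtain ⟨hli, hsp⟩ := b.is_basis_iff_det.2 (hdet ▸ isUnit_one)
  set e := Basis.mk hli hsp.ge
  have he : ⇑e = v := coe_mk _ _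
  have hsum : ∀ c : ι →₀ K, (c.sum fun i a => a • v i) = e.repr.symm c := fun c => by
    rw [e.repr_symm_apply, Finsupp.linearCombination_apply, he]
  have hinv : e.toMatrix b = (b.toMatrix v).adjugate := by
    have h := congrArg ((b.toMatrix v).adjugate * ·) (b.toMatrix_mul_toMatrix_flip e)
    simpa [← Matrix.mul_assoc, Matrix.adjugate_mul, ← det_apply, hdet, he] using h
  constructor
  · intro hx
    refine ⟨e.repr x, fun i => ?_, by rw [hsum, LinearEquiv.symm_apply_apply]⟩
    rw [← toMatrix_mulVec_repr (b' := e) (b := b) x, hinv]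
    exact Matrix.mulVec_mem_subring S (Matrix.adjugate_mem_subring S hv) hx i
  · rintro ⟨c, hc, rfl⟩ i
    rw [hsum, ← toMatrix_mulVec_repr (b' := b) (b := e), LinearEquiv.apply_symm_apply, he]
    exact Matrix.mulVec_mem_subring S hv hc i

end Module.Basis

theorem Module.Basis.tensorProduct_image_setOf {R M N ι κ : Type*} [CommSemiring R]
    [AddCommMonoid M] [Module R M] [AddCommMonoid N] [Module R N] (bM : Basis ι R M)
    (bN : Basis κ R N) (Q : κ → Prop) :
    bM.tensorProduct bN '' {p | Q p.2} = {z | ∃ i j, Q j ∧ z = bM i ⊗ₜ[R] bN j} := by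
  ext z
  simp [tensorProduct_apply', eq_comm]

theorem LinearMap.exists_eq_finsum {ι R S M M₂ : Type*} [Semiring R] [Semiring S] {σ : R →+* S}
    [AddCommMonoid M] [Module R M] [AddCommMonoid M₂] [Module S M₂] (f : ι → M →ₛₗ[σ] M₂)
    (hf : ∀ x, (Function.support fun i => f i x).Finite) :
    ∃ F : M →ₛₗ[σ] M₂, ∀ x, F x = ∑ᶠ i, f i x :=
  ⟨{ toFun := fun x => ∑ᶠ i, f i x
     map_add' := fun x y => by simp only [map_add]; exact finsum_add_distrib (hf x) (hf y)
     map_smul' := fun c x => by simp only [map_smulₛₗ]; exact (smul_finsum' (σ c) (hf x)).symm },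
    fun _ => rfl⟩

theorem TensorProduct.map_smul_of_map_tmul {R M N : Type*} [CommSemiring R] [AddCommMonoid M]
    [Module R M] [AddCommMonoid N] [Module R N] (σ : R →+* R) {ψM : M → M} {ψN : N → N}
    (hψM : ∀ (c : R) m, ψM (c • m) = σ c • ψM m) {f : M ⊗[R] N → M ⊗[R] N}
    (hf_add : ∀ x y, f (x + y) = f x + f y) (hf : ∀ m n, f (m ⊗ₜ n) = ψM m ⊗ₜ ψN n)
    (c : R) (x : M ⊗[R] N) : f (c • x) = σ c • f x := by
  induction x using TensorProduct.induction_on with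
  | zero =>
    have hψM0 : ψM 0 = 0 := by simpa using hψM 0 0
    have : f 0 = 0 := by simpa [hψM0] using hf 0 0
    rw [smul_zero, this, smul_zero]
  | tmul m n => rw [TensorProduct.smul_tmul', hf, hf, hψM, TensorProduct.smul_tmul']
  | add x y hx hy => rw [smul_add, hf_add, hf_add, hx, hy, smul_add]

theorem Finsupp.degree_pos_of_nonneg {I R : Type*} [AddCommMonoid R] [PartialOrder R]
    [IsOrderedCancelAddMonoid R] {μ : I →₀ R} (hpos : ∀ i, 0 ≤ μ i)
    (hμ : μ ≠ 0) : 0 < μ.degree :=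
  Finset.sum_pos (fun i hi => (hpos i).lt_of_ne (Ne.symm (Finsupp.mem_support_iff.1 hi)))
    (Finsupp.support_nonempty_iff.2 hμ)

section WeightRaising

variable {K V P I : Type*} [CommRing K] [AddCommGroup V] [Module K V]

structure IsWeightRaising (b : Module.Basis P K V) (w : P → I →₀ ℤ)
    (Θ : (I →₀ ℤ) → V →ₗ[K] V) : Prop where
  apply_zero : Θ 0 = LinearMap.id
  eq_zero_of_not_nonneg : ∀ μ : I →₀ ℤ, (¬ ∀ k, 0 ≤ μ k) → Θ μ = 0
  mem_span : ∀ μ ≠ 0, ∀ j, Θ μ (b j) ∈ Submodule.span K (b '' {i | w i = w j + μ})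

namespace IsWeightRaising

variable {b : Module.Basis P K V} {w : P → I →₀ ℤ} {Θ : (I →₀ ℤ) → V →ₗ[K] V}

theorem repr_apply_eq_zero (hΘ : IsWeightRaising b w Θ) {μ : I →₀ ℤ} (hμ : μ ≠ 0) {i j : P}
    (h : w i ≠ w j + μ) : b.repr (Θ μ (b j)) i = 0 :=
  Finsupp.notMem_support_iff.1 fun hi => h (b.mem_span_image.1 (hΘ.mem_span μ hμ j) hi)

theorem finsum_repr_apply_self (hΘ : IsWeightRaising b w Θ) (i : P) :
    ∑ᶠ μ, b.repr (Θ μ (b i)) i = 1 := by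
  rw [finsum_eq_single _ 0 fun μ hμ => hΘ.repr_apply_eq_zero hμ (by rwa [ne_eq, left_eq_add])]
  simp [hΘ.apply_zero]

theorem degree_lt_of_finsum_repr_apply_ne_zero (hΘ : IsWeightRaising b w Θ) {i j : P}
    (hij : i ≠ j) (h : ∑ᶠ μ, b.repr (Θ μ (b j)) i ≠ 0) : (w j).degree < (w i).degree := by
  obtain ⟨μ, hμ⟩ : ∃ μ, b.repr (Θ μ (b j)) i ≠ 0 := by
    by_contra! h'
    exact h (finsum_eq_zero_of_forall_eq_zero h')
  have hμ0 : μ ≠ 0 := by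
    rintro rfl
    simp [hΘ.apply_zero, Ne.symm hij] at hμ
  have hpos : ∀ k, 0 ≤ μ k := by_contra fun hneg => hμ (by simp [hΘ.eq_zero_of_not_nonneg μ hneg])
  have hw : w i = w j + μ := by_contra fun hne => hμ (hΘ.repr_apply_eq_zero hμ0 hne)
  rw [hw, map_add]
  linarith [Finsupp.degree_pos_of_nonneg hpos hμ0]

theorem det_toMatrix_finsum_eq_one [Fintype P] [DecidableEq P] (hΘ : IsWeightRaising b w Θ)
    (hΘ_fin : ∀ x, (Function.support fun μ => Θ μ x).Finite) :
    (b.toMatrix fun j => ∑ᶠ μ, Θ μ (b j)).det = 1 := by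
  have hentry : ∀ i j, b.toMatrix (fun j => ∑ᶠ μ, Θ μ (b j)) i j = ∑ᶠ μ, b.repr (Θ μ (b j)) i :=
    fun i j => by rw [b.toMatrix_apply, ← b.coord_apply, map_finsum _ (hΘ_fin (b j))]; rfl
  refine Matrix.det_eq_one_of_lt_of_ne_zero _ (fun p => (w p).degree) (fun i => ?_)
    (fun i j hij h => ?_)
  · rw [hentry, hΘ.finsum_repr_apply_self]
  · rw [hentry] at h
    exact hΘ.degree_lt_of_finsum_repr_apply_ne_zero hij h

end IsWeightRaising

end WeightRaising

open scoped Polynomial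

theorem Polynomial.eq_zero_of_inftyValuation_lt_one {F : Type*} [Field F] [DecidableEq (RatFunc F)]
    {p : F[X]} (hp : RatFunc.inftyValuation F (algebraMap F[X] (RatFunc F) p) < 1) : p = 0 := by
  by_contra h
  rw [RatFunc.inftyValuation_apply, RatFunc.inftyValuation.polynomial F h, ← WithZero.exp_zero,
    WithZero.exp_lt_exp] at hp
  omega

theorem qq_inv_mem_ZqInv : qq⁻¹ ∈ ZqInv := Subring.subset_closure rfl

theorem qInvZqInv_subset_ZqInv : qInvZqInv ⊆ ZqInv := by
  rintro _ ⟨y, hy, rfl⟩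
  exact mul_mem qq_inv_mem_ZqInv hy

theorem ZqInv_le_LaurentZ : ZqInv ≤ LaurentZ :=
  Subring.closure_mono (Set.singleton_subset_iff.2 (Set.mem_insert_of_mem _ rfl))

section

open scoped Classical

theorem inftyValuation_qq_inv_lt_one : RatFunc.inftyValuation ℚ qq⁻¹ < 1 := by
  rw [qq, ← zpow_neg_one, RatFunc.inftyValuation.X_zpow, ← WithZero.exp_zero, WithZero.exp_lt_exp]
  norm_num

theorem ZqInv_le_integer : ZqInv ≤ (RatFunc.inftyValuation ℚ).integer :=
  Subring.closure_le.2 (Set.singleton_subset_iff.2 inftyValuation_qq_inv_lt_one.le)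

theorem inftyValuation_lt_one_of_mem_qInvZqInv {x : Fq} (hx : x ∈ qInvZqInv) :
    RatFunc.inftyValuation ℚ x < 1 := by
  obtain ⟨y, hy, rfl⟩ := hx
  rw [map_mul]
  exact mul_lt_one_of_lt_of_le inftyValuation_qq_inv_lt_one (ZqInv_le_integer hy)

end

theorem map_mem_range_algebraMap_of_mem_ZqInv {bar : Fq ≃+* Fq} (hbarq : bar qq = qq⁻¹)
    {x : Fq} (hx : x ∈ ZqInv) : bar x ∈ (algebraMap ℚ[X] Fq).range := by
  refine (Subring.closure_le (t := (algebraMap ℚ[X] Fq).range.comap (bar : Fq →+* Fq))).2 ?_ hx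
  rintro _ rfl
  exact ⟨Polynomial.X, by rw [RingHom.coe_coe, map_inv₀, hbarq, inv_inv, RatFunc.algebraMap_X, qq]⟩

/-- `bar` maps `q⁻¹ℤ[q⁻¹]` to polynomials in `q`, on which the valuation at `∞` is never `< 1`
except at `0`. -/
theorem eq_one_of_bar_eq_of_sub_one_mem {bar : Fq ≃+* Fq} (hbarq : bar qq = qq⁻¹) {d : Fq}
    (hbar : bar d = d) (hd : d - 1 ∈ qInvZqInv) : d = 1 := by
  classical
  have hbar' : bar (d - 1) = d - 1 := by rw [map_sub, map_one, hbar]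
  obtain ⟨p, hp⟩ := hbar' ▸ map_mem_range_algebraMap_of_mem_ZqInv hbarq (qInvZqInv_subset_ZqInv hd)
  have hlt := inftyValuation_lt_one_of_mem_qInvZqInv hd
  rw [← hp] at hlt
  rw [← sub_eq_zero, ← hp, Polynomial.eq_zero_of_inftyValuation_lt_one hlt, map_zero]

theorem mem_ZqInv_of_sub_one_mem {P : Type*} [DecidableEq P] {A : Matrix P P Fq} {i j : P}
    (h : A i j - (1 : Matrix P P Fq) i j ∈ qInvZqInv) : A i j ∈ ZqInv := by
  rw [← sub_add_cancel (A i j) ((1 : Matrix P P Fq) i j), Matrix.one_apply]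
  refine add_mem (qInvZqInv_subset_ZqInv h) ?_
  split_ifs
  exacts [one_mem _, zero_mem _]

theorem Matrix.det_sub_one_mem_qInvZqInv {P : Type*} [Fintype P] [DecidableEq P]
    {A : Matrix P P Fq} (hA : ∀ i j, A i j - (1 : Matrix P P Fq) i j ∈ qInvZqInv) :
    A.det - 1 ∈ qInvZqInv := by
  let t : ZqInv := ⟨qq⁻¹, qq_inv_mem_ZqInv⟩
  have hmem : ∀ x : ZqInv, (x : Fq) ∈ qInvZqInv ↔ x ∈ Ideal.span {t} := fun x => by
    rw [Ideal.mem_span_singleton']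
    constructor
    · rintro ⟨y, hy, h⟩
      exact ⟨⟨y, hy⟩, Subtype.ext (by rw [h, mul_comm]; rfl)⟩
    · rintro ⟨y, rfl⟩
      exact ⟨y, y.2, mul_comm _ _⟩
  let A' : Matrix P P ZqInv := fun i j => ⟨A i j, mem_ZqInv_of_sub_one_mem (hA i j)⟩
  have hcoe : ∀ i j, ((1 : Matrix P P ZqInv) i j : Fq) = (1 : Matrix P P Fq) i j := fun i j => by
    simp [Matrix.one_apply, apply_ite]
  have hdet : A.det = A'.det := (RingHom.map_det ZqInv.subtype A').symm
  have := Matrix.det_sub_det_mem_of_sub_mem (Ideal.span {t}) (A := A') (B := 1) fun i j =>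
    (hmem _).1 (by push_cast; rw [hcoe]; exact hA i j)
  rw [← hmem, Matrix.det_one] at this
  push_cast at this
  rwa [← hdet] at this

theorem Module.Basis.det_eq_one_of_bar_invariant {P V : Type*} [Fintype P] [DecidableEq P]
    [AddCommGroup V] [Module Fq V] (b : Module.Basis P Fq V) {bar : Fq ≃+* Fq}
    (hbarq : bar qq = qq⁻¹) (f : V →ₛₗ[(bar : Fq →+* Fq)] V) (hf : (b.toMatrix (f ∘ b)).det = 1)
    {v : P → V} (hv : ∀ j, f (v j) = v j)
    (hvb : ∀ i j, b.toMatrix v i j - (1 : Matrix P P Fq) i j ∈ qInvZqInv) : b.det v = 1 := by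
  refine eq_one_of_bar_eq_of_sub_one_mem hbarq ?_
    (b.det_apply v ▸ Matrix.det_sub_one_mem_qInvZqInv hvb)
  have := b.det_eq_det_mul_map_det_of_semilinearMap f hv
  rw [hf, one_mul] at this
  exact this.symm

theorem statement_2_general
    -- the weight lattice `X = ℤ𝕀` of the root datum `(𝕀, ·)` of finite type
    (I : Type)
    -- a based `U^ι`-module `(M, B^ι)` and a finite-dimensional based `U`-module `(N, B)`
    (ιM ιN : Type) [Finite ιM] [Finite ιN]
    (M N : Type) [AddCommGroup M] [Module Fq M] [AddCommGroup N] [Module Fq N]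
    (bM : Module.Basis ιM Fq M) (bN : Module.Basis ιN Fq N)
    -- the bar involution of `ℚ(q)`, `q ↦ q⁻¹`
    (bar : Fq ≃+* Fq) (hbarq : bar qq = qq⁻¹)
    -- the `U`-weights of the members of the basis `B` of `N`
    (wtN : ιN → I →₀ ℤ)
    -- the bar involution `ψ_ι` of `M`, fixing `B^ι`
    (ψM : M → M)
    (hψM_smul : ∀ (c : Fq) (x : M), ψM (c • x) = bar c • ψM x)
    (hψM_fix : ∀ i, ψM (bM i) = bM i)
    -- the bar involution `ψ` of `N`, fixing `B`
    (ψN : N → N)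
    (hψN_fix : ∀ j, ψN (bN j) = bN j)
    -- the map `ψ_ι ⊗ ψ` on `M ⊗ N`
    (ψMN : M ⊗[Fq] N → M ⊗[Fq] N)
    (hψMN_add : ∀ x y, ψMN (x + y) = ψMN x + ψMN y)
    (hψMN : ∀ (m : M) (n : N), ψMN (m ⊗ₜ[Fq] n) = ψM m ⊗ₜ[Fq] ψN n)
    -- the action on `M ⊗ N` of the components `Θ^ι_μ ∈ U^ι ⊗ U⁺_μ` of
    -- `Θ^ι = Δ(Υ)·Θ·(Υ⁻¹ ⊗ id)`
    (Θi : (I →₀ ℤ) → (M ⊗[Fq] N →ₗ[Fq] M ⊗[Fq] N))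
    (hΘi_zero : Θi 0 = LinearMap.id)
    (hΘi_pos : ∀ μ : I →₀ ℤ, (¬ ∀ i, 0 ≤ μ i) → Θi μ = 0)
    -- `Θ^ι_μ ∈ U^ι ⊗ U⁺_μ`: it raises the `N`-weight exactly by `μ`
    (hΘi_wt : ∀ μ : I →₀ ℤ, μ ≠ 0 → ∀ (i : ιM) (j : ιN),
      Θi μ (bM i ⊗ₜ[Fq] bN j) ∈ Submodule.span Fq
        {z : M ⊗[Fq] N | ∃ i' j', wtN j' = wtN j + μ ∧ z = bM i' ⊗ₜ[Fq] bN j'})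
    (hΘi_fin : ∀ x : M ⊗[Fq] N, {μ : I →₀ ℤ | Θi μ x ≠ 0}.Finite)
    -- the new bar involution `ψ_ι := Θ^ι ∘ (ψ_ι ⊗ ψ)` on `M ⊗ N`
    (Ψ : M ⊗[Fq] N → M ⊗[Fq] N)
    (hΨ : ∀ x, Ψ x = ∑ᶠ μ : I →₀ ℤ, Θi μ (ψMN x))
    -- the family `b₁ ◇_ι b₂`: `ψ_ι`-invariant and congruent to `b₁ ⊗ b₂`
    -- modulo `q⁻¹ℤ[q⁻¹]·(B^ι ⊗ B)`
    (cb : ιM × ιN → M ⊗[Fq] N)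
    (hcb_inv : ∀ p, Ψ (cb p) = cb p)
    (hcb_congr : ∀ p p' : ιM × ιN,
      (bM.tensorProduct bN).repr (cb p - bM p.1 ⊗ₜ[Fq] bN p.2) p' ∈ qInvZqInv) :
    -- a `ℚ(q)`-basis of `M ⊗ N`
    (LinearIndependent Fq cb ∧ Submodule.span Fq (Set.range cb) = ⊤) ∧
    -- a `ℤ[q,q⁻¹]`-basis of `_𝒜M ⊗_𝒜 _𝒜N`
    (∀ x : M ⊗[Fq] N,
      (∀ p, (bM.tensorProduct bN).repr x p ∈ LaurentZ) ↔
      ∃ c : ιM × ιN →₀ Fq, (∀ p, c p ∈ LaurentZ) ∧ x = c.sum fun p a => a • cb p) ∧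
    -- a `ℤ[q⁻¹]`-basis of `𝓛(M) ⊗ 𝓛(N)`
    (∀ x : M ⊗[Fq] N,
      (∀ p, (bM.tensorProduct bN).repr x p ∈ ZqInv) ↔
      ∃ c : ιM × ιN →₀ Fq, (∀ p, c p ∈ ZqInv) ∧ x = c.sum fun p a => a • cb p) := by
  classical
  have := Fintype.ofFinite ιM
  have := Fintype.ofFinite ιN
  set b := bM.tensorProduct bN
  have hb : ∀ p, b p = bM p.1 ⊗ₜ[Fq] bN p.2 := bM.tensorProduct_apply' bN
  let ψL : M ⊗[Fq] N →ₛₗ[(bar : Fq →+* Fq)] M ⊗[Fq] N :=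
    ⟨⟨ψMN, hψMN_add⟩, TensorProduct.map_smul_of_map_tmul _ hψM_smul hψMN_add hψMN⟩
  obtain ⟨ΨL, hΨL⟩ :=
    LinearMap.exists_eq_finsum (fun μ => (Θi μ).comp ψL) fun x => hΘi_fin (ψMN x)
  have hψ_fix : ∀ p, ψMN (b p) = b p := fun p => by
    rw [hb, hψMN, hψM_fix, hψN_fix]
  have hΘ : IsWeightRaising b (fun p => wtN p.2) Θi := ⟨hΘi_zero, hΘi_pos, fun μ hμ p => by
    rw [bM.tensorProduct_image_setOf bN (fun j => wtN j = wtN p.2 + μ), hb]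
    exact hΘi_wt μ hμ p.1 p.2⟩
  have hR : (b.toMatrix (ΨL ∘ b)).det = 1 := by
    have : ΨL ∘ b = fun p => ∑ᶠ μ, Θi μ (b p) := funext fun p => by simp [hΨL, ψL, hψ_fix]
    rw [this]
    exact hΘ.det_toMatrix_finsum_eq_one hΘi_fin
  have hcongr : ∀ i j, b.toMatrix cb i j - (1 : Matrix _ _ Fq) i j ∈ qInvZqInv := fun i j => by
    rw [b.toMatrix_sub_one_apply, hb]
    exact hcb_congr j i
  have hdet : b.det cb = 1 := b.det_eq_one_of_bar_invariant hbarq ΨL hR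
    (fun p => (hΨL _).trans ((hΨ _).symm.trans (hcb_inv p))) hcongr
  have hZ : ∀ i j, b.toMatrix cb i j ∈ ZqInv := fun i j => mem_ZqInv_of_sub_one_mem (hcongr i j)
  exact ⟨b.is_basis_iff_det.2 (hdet ▸ isUnit_one),
    b.forall_repr_mem_iff_exists_sum LaurentZ (fun i j => ZqInv_le_LaurentZ (hZ i j)) hdet,
    b.forall_repr_mem_iff_exists_sum ZqInv hZ hdet⟩

theorem statement_2
    -- the weight lattice `X = ℤ𝕀` of the root datum `(𝕀, ·)` of finite type
    (I : Type) [Fintype I]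
    -- a based `U^ι`-module `(M, B^ι)` and a finite-dimensional based `U`-module `(N, B)`
    (ιM ιN : Type) [Finite ιM] [Finite ιN]
    (M N : Type) [AddCommGroup M] [Module Fq M] [AddCommGroup N] [Module Fq N]
    (bM : Module.Basis ιM Fq M) (bN : Module.Basis ιN Fq N)
    -- the bar involution of `ℚ(q)`, `q ↦ q⁻¹`
    (bar : Fq ≃+* Fq) (hbarq : bar qq = qq⁻¹) (hbar_invol : ∀ x, bar (bar x) = x)
    -- the `U`-weights of the members of the basis `B` of `N`
    (wtN : ιN → I →₀ ℤ)
    -- the bar involution `ψ_ι` of `M`, fixing `B^ι`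
    (ψM : M → M) (hψM_add : ∀ x y, ψM (x + y) = ψM x + ψM y)
    (hψM_smul : ∀ (c : Fq) (x : M), ψM (c • x) = bar c • ψM x)
    (hψM_fix : ∀ i, ψM (bM i) = bM i)
    -- the bar involution `ψ` of `N`, fixing `B`
    (ψN : N → N) (hψN_add : ∀ x y, ψN (x + y) = ψN x + ψN y)
    (hψN_smul : ∀ (c : Fq) (x : N), ψN (c • x) = bar c • ψN x)
    (hψN_fix : ∀ j, ψN (bN j) = bN j)
    -- the map `ψ_ι ⊗ ψ` on `M ⊗ N`
    (ψMN : M ⊗[Fq] N → M ⊗[Fq] N)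
    (hψMN_add : ∀ x y, ψMN (x + y) = ψMN x + ψMN y)
    (hψMN : ∀ (m : M) (n : N), ψMN (m ⊗ₜ[Fq] n) = ψM m ⊗ₜ[Fq] ψN n)
    -- the action on `M ⊗ N` of the components `Θ^ι_μ ∈ U^ι ⊗ U⁺_μ` of
    -- `Θ^ι = Δ(Υ)·Θ·(Υ⁻¹ ⊗ id)`
    (Θi : (I →₀ ℤ) → (M ⊗[Fq] N →ₗ[Fq] M ⊗[Fq] N))
    (hΘi_zero : Θi 0 = LinearMap.id)
    (hΘi_pos : ∀ μ : I →₀ ℤ, (¬ ∀ i, 0 ≤ μ i) → Θi μ = 0)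
    -- `Θ^ι_μ ∈ U^ι ⊗ U⁺_μ`: it raises the `N`-weight exactly by `μ`
    (hΘi_wt : ∀ μ : I →₀ ℤ, μ ≠ 0 → ∀ (i : ιM) (j : ιN),
      Θi μ (bM i ⊗ₜ[Fq] bN j) ∈ Submodule.span Fq
        {z : M ⊗[Fq] N | ∃ i' j', wtN j' = wtN j + μ ∧ z = bM i' ⊗ₜ[Fq] bN j'})
    -- integrality of `Θ^ι_μ`
    (hΘi_int : ∀ (μ : I →₀ ℤ) (i : ιM) (j : ιN) (p : ιM × ιN),
      (bM.tensorProduct bN).repr (Θi μ (bM i ⊗ₜ[Fq] bN j)) p ∈ LaurentZ)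
    (hΘi_fin : ∀ x : M ⊗[Fq] N, {μ : I →₀ ℤ | Θi μ x ≠ 0}.Finite)
    -- the new bar involution `ψ_ι := Θ^ι ∘ (ψ_ι ⊗ ψ)` on `M ⊗ N`
    (Ψ : M ⊗[Fq] N → M ⊗[Fq] N)
    (hΨ : ∀ x, Ψ x = ∑ᶠ μ : I →₀ ℤ, Θi μ (ψMN x))
    (hΨ_invol : ∀ x, Ψ (Ψ x) = x)
    -- the family `b₁ ◇_ι b₂`: `ψ_ι`-invariant and congruent to `b₁ ⊗ b₂`
    -- modulo `q⁻¹ℤ[q⁻¹]·(B^ι ⊗ B)`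
    (cb : ιM × ιN → M ⊗[Fq] N)
    (hcb_inv : ∀ p, Ψ (cb p) = cb p)
    (hcb_congr : ∀ p p' : ιM × ιN,
      (bM.tensorProduct bN).repr (cb p - bM p.1 ⊗ₜ[Fq] bN p.2) p' ∈ qInvZqInv) :
    -- a `ℚ(q)`-basis of `M ⊗ N`
    (LinearIndependent Fq cb ∧ Submodule.span Fq (Set.range cb) = ⊤) ∧
    -- a `ℤ[q,q⁻¹]`-basis of `_𝒜M ⊗_𝒜 _𝒜N`
    (∀ x : M ⊗[Fq] N,
      (∀ p, (bM.tensorProduct bN).repr x p ∈ LaurentZ) ↔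
      ∃ c : ιM × ιN →₀ Fq, (∀ p, c p ∈ LaurentZ) ∧ x = c.sum fun p a => a • cb p) ∧
    -- a `ℤ[q⁻¹]`-basis of `𝓛(M) ⊗ 𝓛(N)`
    (∀ x : M ⊗[Fq] N,
      (∀ p, (bM.tensorProduct bN).repr x p ∈ ZqInv) ↔
      ∃ c : ιM × ιN →₀ Fq, (∀ p, c p ∈ ZqInv) ∧ x = c.sum fun p a => a • cb p) :=
  statement_2_general I ιM ιN M N bM bN bar hbarq wtN ψM hψM_smul hψM_fix ψN hψN_fix ψMN hψMN_add
    hψMN Θi hΘi_zero hΘi_pos hΘi_wt hΘi_fin Ψ hΨ cb hcb_inv hcb_congr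

end
end

section
/- Let (U, U^ι) be a quantum symmetric pair of finite type with quasi-K matrix Υ = Σ_μ Υ_μ (Υ_0 = 1, Υ_μ ∈ U^+_μ). Then Δ(Υ) ∈ Υ ⊗ 1 + Σ_{0 ≠ μ ∈ ℕ𝕀} U ⊗ U^+_μ, where Δ is the comultiplication of U (computed in the appropriate completion of U ⊗ U). -/
/-!
Let `M ⊆ U ⊗ U` be the span of the tensors `x ⊗ y` with `y` of nonzero weight `μ ≥ 0`.
Since the positive weights are closed under addition, `M` is closed under multiplication,
and it is stable under left and right multiplication by `U ⊗ 1`.  Writing `δ x := Δ x - x ⊗ 1`,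
these facts and the identity
`δ (a b) = (a ⊗ 1) δ b + δ a (b ⊗ 1) + δ a δ b`
show that `{x | δ x ∈ M}` is a subalgebra.  It contains each `E_i`, as `δ E_i = K̃_i ⊗ E_i`,
hence all of `U⁺`, and in particular every component `Υ_μ`.
-/

open scoped TensorProduct Pointwise

noncomputable section

section TmulSpan

variable {R A B : Type*} [CommSemiring R] [Semiring A] [Semiring B] [Algebra R A] [Algebra R B]

variable (R A) in
def tmulSpan (T : Set B) : Submodule R (A ⊗[R] B) :=
  Submodule.span R {z | ∃ x : A, ∃ y ∈ T, z = x ⊗ₜ[R] y}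

theorem tmul_mem_tmulSpan (x : A) {T : Set B} {y : B} (hy : y ∈ T) :
    x ⊗ₜ[R] y ∈ tmulSpan R A T :=
  Submodule.subset_span ⟨x, y, hy, rfl⟩

theorem tmulSpan_mul_tmulSpan_le {T₁ T₂ T₃ : Set B} (h : T₁ * T₂ ⊆ T₃) :
    tmulSpan R A T₁ * tmulSpan R A T₂ ≤ tmulSpan R A T₃ := by
  rw [tmulSpan, tmulSpan, Submodule.span_mul_span]
  refine Submodule.span_le.mpr ?_
  rintro _ ⟨_, ⟨x, y, hy, rfl⟩, _, ⟨x', y', hy', rfl⟩, rfl⟩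
  dsimp only
  rw [Algebra.TensorProduct.tmul_mul_tmul]
  exact tmul_mem_tmulSpan _ (h (Set.mul_mem_mul hy hy'))

end TmulSpan

section AdjoinInduction

variable {R A B : Type*} [CommRing R] [Ring A] [Ring B] [Algebra R A] [Algebra R B]

theorem comul_sub_tmul_one_mem_tmulSpan_of_mem_adjoin {T : Set B} (hT : T * T ⊆ T)
    (Δ : A →ₐ[R] A ⊗[R] B) {s : Set A} (hs : ∀ x ∈ s, Δ x - x ⊗ₜ[R] 1 ∈ tmulSpan R A T)
    {x : A} (hx : x ∈ Algebra.adjoin R s) : Δ x - x ⊗ₜ[R] 1 ∈ tmulSpan R A T := by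
  induction hx using Algebra.adjoin_induction with
  | mem x hx => exact hs x hx
  | algebraMap r =>
    rw [AlgHom.commutes, Algebra.TensorProduct.algebraMap_apply, sub_self]
    exact Submodule.zero_mem _
  | add a b _ _ ha hb =>
    rw [map_add, TensorProduct.add_tmul, add_sub_add_comm]
    exact Submodule.add_mem _ ha hb
  | mul a b _ _ ha hb =>
    have hone : (a ⊗ₜ[R] (1 : B)) * (b ⊗ₜ[R] 1) = (a * b) ⊗ₜ[R] 1 := by
      rw [Algebra.TensorProduct.tmul_mul_tmul, one_mul]
    have hexpand : Δ (a * b) - (a * b) ⊗ₜ[R] 1 =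
        (a ⊗ₜ[R] 1) * (Δ b - b ⊗ₜ[R] 1) + (Δ a - a ⊗ₜ[R] 1) * (b ⊗ₜ[R] 1) +
          (Δ a - a ⊗ₜ[R] 1) * (Δ b - b ⊗ₜ[R] 1) := by
      rw [map_mul, ← hone]
      noncomm_ring
    rw [hexpand]
    refine Submodule.add_mem _ (Submodule.add_mem _ ?_ ?_) ?_
    · exact tmulSpan_mul_tmulSpan_le (one_mul T).subset
        (Submodule.mul_mem_mul (tmul_mem_tmulSpan a rfl) hb)
    · exact tmulSpan_mul_tmulSpan_le (mul_one T).subset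
        (Submodule.mul_mem_mul ha (tmul_mem_tmulSpan b rfl))
    · exact tmulSpan_mul_tmulSpan_le hT (Submodule.mul_mem_mul ha hb)

end AdjoinInduction

section PositivePart

variable {R A Γ : Type*} [CommSemiring R] [Semiring A] [Algebra R A]
  [AddCommMonoid Γ] [PartialOrder Γ] [IsOrderedAddMonoid Γ]

def positivePart (U : Γ → Submodule R A) : Set A :=
  {y | ∃ μ, 0 < μ ∧ y ∈ U μ}

theorem positivePart_mul_subset {U : Γ → Submodule R A}
    (hU : ∀ (μ ν : Γ) (x y : A), x ∈ U μ → y ∈ U ν → x * y ∈ U (μ + ν)) :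
    positivePart U * positivePart U ⊆ positivePart U := by
  rintro _ ⟨x, ⟨μ, hμ, hx⟩, y, ⟨ν, hν, hy⟩, rfl⟩
  exact ⟨μ + ν, hμ.trans_le (le_add_of_nonneg_right hν.le), hU μ ν x y hx hy⟩

end PositivePart

theorem statement_6_general
    -- the root datum `(𝕀, ·)` of finite type
    (I : Type)
    -- the quantum group `U`
    (UU : Type) [Ring UU] [Algebra Fq UU]
    -- the weight pieces `U⁺_μ`
    (Uplus : (I →₀ ℤ) → Submodule Fq UU)
    (hUplus_mul : ∀ (μ ν : I →₀ ℤ) (x y : UU),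
      x ∈ Uplus μ → y ∈ Uplus ν → x * y ∈ Uplus (μ + ν))
    -- the comultiplication `Δ` and the generators `E_i`, `K̃_i`, with
    -- `Δ(E_i) = E_i ⊗ 1 + K̃_i ⊗ E_i`
    (comul : UU →ₐ[Fq] UU ⊗[Fq] UU)
    (E Kt : I → UU)
    (hcomulE : ∀ i, comul (E i) = E i ⊗ₜ[Fq] 1 + Kt i ⊗ₜ[Fq] E i)
    (hE : ∀ i, E i ∈ Uplus (Finsupp.single i 1))
    (hUgen : ∀ (μ : I →₀ ℤ), ∀ x ∈ Uplus μ, x ∈ Algebra.adjoin Fq (Set.range E))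
    -- the components of the quasi-K matrix `Υ`: `Υ_0 = 1`, `Υ_μ ∈ U⁺_μ`
    (Υc : (I →₀ ℤ) → UU)
    (hΥwt : ∀ μ, Υc μ ∈ Uplus μ) :
    -- conclusion: `Δ(Υ) ∈ Υ ⊗ 1 + Σ_{0 ≠ μ ∈ ℕ𝕀} U ⊗ U⁺_μ`, componentwise
    ∀ α : I →₀ ℤ, comul (Υc α) - Υc α ⊗ₜ[Fq] 1 ∈
      Submodule.span Fq {z : UU ⊗[Fq] UU |
        ∃ μ : I →₀ ℤ, μ ≠ 0 ∧ (∀ i, 0 ≤ μ i) ∧ ∃ x : UU, ∃ y ∈ Uplus μ, z = x ⊗ₜ[Fq] y} := by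
  have hspan : Submodule.span Fq {z : UU ⊗[Fq] UU |
      ∃ μ : I →₀ ℤ, μ ≠ 0 ∧ (∀ i, 0 ≤ μ i) ∧ ∃ x : UU, ∃ y ∈ Uplus μ, z = x ⊗ₜ[Fq] y} =
      tmulSpan Fq UU (positivePart Uplus) := by
    congr 1
    ext z
    constructor
    · rintro ⟨μ, hμ, hpos, x, y, hy, rfl⟩
      exact ⟨x, y, ⟨μ, lt_of_le_of_ne hpos hμ.symm, hy⟩, rfl⟩
    · rintro ⟨x, y, ⟨μ, hμ, hy⟩, rfl⟩
      exact ⟨μ, hμ.ne', hμ.le, x, y, hy, rfl⟩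
  have hgen : ∀ x ∈ Set.range E, comul x - x ⊗ₜ[Fq] 1 ∈ tmulSpan Fq UU (positivePart Uplus) := by
    rintro _ ⟨i, rfl⟩
    rw [hcomulE, add_sub_cancel_left]
    exact tmul_mem_tmulSpan _ ⟨Finsupp.single i 1,
      (Finsupp.single_nonneg.mpr zero_le_one).lt_of_ne (Finsupp.single_ne_zero.mpr one_ne_zero).symm,
      hE i⟩
  intro α
  rw [hspan]
  exact comul_sub_tmul_one_mem_tmulSpan_of_mem_adjoin (positivePart_mul_subset hUplus_mul)
    comul hgen (hUgen α _ (hΥwt α))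

theorem statement_6
    -- the root datum `(𝕀, ·)` of finite type
    (I : Type) [Fintype I]
    -- the quantum group `U`
    (UU : Type) [Ring UU] [Algebra Fq UU]
    -- the weight pieces `U⁺_μ`
    (Uplus : (I →₀ ℤ) → Submodule Fq UU)
    (hU0 : Uplus 0 = Submodule.span Fq {(1 : UU)})
    (hUplus_mul : ∀ (μ ν : I →₀ ℤ) (x y : UU),
      x ∈ Uplus μ → y ∈ Uplus ν → x * y ∈ Uplus (μ + ν))
    -- the comultiplication `Δ` and the generators `E_i`, `K̃_i`, with
    -- `Δ(E_i) = E_i ⊗ 1 + K̃_i ⊗ E_i`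
    (comul : UU →ₐ[Fq] UU ⊗[Fq] UU)
    (E Kt : I → UU)
    (hcomulE : ∀ i, comul (E i) = E i ⊗ₜ[Fq] 1 + Kt i ⊗ₜ[Fq] E i)
    (hE : ∀ i, E i ∈ Uplus (Finsupp.single i 1))
    (hUgen : ∀ (μ : I →₀ ℤ), ∀ x ∈ Uplus μ, x ∈ Algebra.adjoin Fq (Set.range E))
    -- the components of the quasi-K matrix `Υ`: `Υ_0 = 1`, `Υ_μ ∈ U⁺_μ`
    (Υc : (I →₀ ℤ) → UU)
    (hΥ0 : Υc 0 = 1)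
    (hΥwt : ∀ μ, Υc μ ∈ Uplus μ) :
    -- conclusion: `Δ(Υ) ∈ Υ ⊗ 1 + Σ_{0 ≠ μ ∈ ℕ𝕀} U ⊗ U⁺_μ`, componentwise
    ∀ α : I →₀ ℤ, comul (Υc α) - Υc α ⊗ₜ[Fq] 1 ∈
      Submodule.span Fq {z : UU ⊗[Fq] UU |
        ∃ μ : I →₀ ℤ, μ ≠ 0 ∧ (∀ i, 0 ≤ μ i) ∧ ∃ x : UU, ∃ y ∈ Uplus μ, z = x ⊗ₜ[Fq] y} :=
  statement_6_general I UU Uplus hUplus_mul comul E Kt hcomulE hE hUgen Υc hΥwt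
end
end

section
/- Let (U, U^ι) be a quantum symmetric pair of finite type, (M, B^ι) a based U^ι-module, (N, B) a finite-dimensional based U-module, and ψ_ι = Θ^ι ∘ (ψ_ι ⊗ ψ) the bar involution on M ⊗ N. Then for b₁ ∈ B^ι and b₂ ∈ B, ψ_ι(b₁ ⊗ b₂) ∈ b₁ ⊗ b₂ + Σ ℤ[q,q^{-1}]·b₁' ⊗ b₂', the sum over pairs (b₁', b₂') ∈ B^ι × B with |b₂'| < |b₂| in the partial order μ' < μ iff μ' − μ ∈ ℕ𝕀. -/
/-!
The map `ψ_ι ⊗ ψ` fixes `b₁ ⊗ b₂` and `Θ^ι_0 = 1`, so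
`ψ_ι(b₁ ⊗ b₂) - b₁ ⊗ b₂ = Σ_{μ ≠ 0} Θ^ι_μ(b₁ ⊗ b₂)`, a finite sum. Each summand has coefficients
in `ℤ[q,q⁻¹]`, and since `Θ^ι_μ ∈ U^ι ⊗ U⁺_μ` with `0 ≠ μ ∈ ℕ𝕀` it is supported on basis vectors
`b₁' ⊗ b₂'` with `|b₂'| = |b₂| + μ > |b₂|`.
-/

open scoped TensorProduct

noncomputable section

theorem Module.Basis.mem_span_tmul_iff_repr_ne_zero {R ι κ M N : Type*} [CommSemiring R]
    [AddCommMonoid M] [Module R M] [AddCommMonoid N] [Module R N]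
    (b : Module.Basis ι R M) (c : Module.Basis κ R N) (P : ι → κ → Prop) {x : M ⊗[R] N} :
    x ∈ Submodule.span R {z | ∃ i j, P i j ∧ z = b i ⊗ₜ[R] c j} ↔
      ∀ p, (b.tensorProduct c).repr x p ≠ 0 → P p.1 p.2 := by
  have hset : {z | ∃ i j, P i j ∧ z = b i ⊗ₜ[R] c j} =
      b.tensorProduct c '' {p | P p.1 p.2} := by
    ext z
    simp only [Set.mem_ofPred_eq, Set.mem_image, Module.Basis.tensorProduct_apply, Prod.exists]
    grind
  rw [hset, Module.Basis.mem_span_image]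
  exact ⟨fun h p hp => h (Finsupp.mem_support_iff.mpr hp),
    fun h p hp => h p (Finsupp.mem_support_iff.mp hp)⟩

theorem wtLT_add_self {I : Type} {μ ν : I →₀ ℤ} (hν : ∀ i, 0 ≤ ν i) (hν0 : ν ≠ 0) :
    wtLT (μ + ν) μ :=
  ⟨fun i => le_add_of_nonneg_right (hν i), fun h => hν0 (by simpa using h)⟩

theorem statement_7_general
    -- the weight lattice `X = ℤ𝕀` of the root datum `(𝕀, ·)` of finite type
    (I : Type)
    -- a based `U^ι`-module `(M, B^ι)` and a finite-dimensional based `U`-module `(N, B)`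
    (ιM ιN : Type)
    (M N : Type) [AddCommGroup M] [Module Fq M] [AddCommGroup N] [Module Fq N]
    (bM : Module.Basis ιM Fq M) (bN : Module.Basis ιN Fq N)
    -- the `U`-weights of the members of the basis `B` of `N`
    (wtN : ιN → I →₀ ℤ)
    -- the bar involution `ψ_ι` of `M`, fixing `B^ι`
    (ψM : M → M)
    (hψM_fix : ∀ i, ψM (bM i) = bM i)
    -- the bar involution `ψ` of `N`, fixing `B`
    (ψN : N → N)
    (hψN_fix : ∀ j, ψN (bN j) = bN j)
    -- the map `ψ_ι ⊗ ψ` on `M ⊗ N`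
    (ψMN : M ⊗[Fq] N → M ⊗[Fq] N)
    (hψMN : ∀ (m : M) (n : N), ψMN (m ⊗ₜ[Fq] n) = ψM m ⊗ₜ[Fq] ψN n)
    -- the action on `M ⊗ N` of the components `Θ^ι_μ ∈ U^ι ⊗ U⁺_μ` of
    -- `Θ^ι = Δ(Υ)·Θ·(Υ⁻¹ ⊗ id)`
    (Θi : (I →₀ ℤ) → (M ⊗[Fq] N →ₗ[Fq] M ⊗[Fq] N))
    (hΘi_zero : Θi 0 = LinearMap.id)
    (hΘi_pos : ∀ μ : I →₀ ℤ, (¬ ∀ i, 0 ≤ μ i) → Θi μ = 0)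
    -- `Θ^ι_μ ∈ U^ι ⊗ U⁺_μ`: it raises the `N`-weight exactly by `μ`
    (hΘi_wt : ∀ μ : I →₀ ℤ, μ ≠ 0 → ∀ (i : ιM) (j : ιN),
      Θi μ (bM i ⊗ₜ[Fq] bN j) ∈ Submodule.span Fq
        {z : M ⊗[Fq] N | ∃ i' j', wtN j' = wtN j + μ ∧ z = bM i' ⊗ₜ[Fq] bN j'})
    -- integrality of `Θ^ι_μ`
    (hΘi_int : ∀ (μ : I →₀ ℤ) (i : ιM) (j : ιN) (p : ιM × ιN),
      (bM.tensorProduct bN).repr (Θi μ (bM i ⊗ₜ[Fq] bN j)) p ∈ LaurentZ)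
    (hΘi_fin : ∀ x : M ⊗[Fq] N, {μ : I →₀ ℤ | Θi μ x ≠ 0}.Finite)
    -- the new bar involution `ψ_ι := Θ^ι ∘ (ψ_ι ⊗ ψ)` on `M ⊗ N`
    (Ψ : M ⊗[Fq] N → M ⊗[Fq] N)
    (hΨ : ∀ x, Ψ x = ∑ᶠ μ : I →₀ ℤ, Θi μ (ψMN x)) :
    -- conclusion: `ψ_ι(b₁ ⊗ b₂) - b₁ ⊗ b₂` has coefficients in `ℤ[q,q⁻¹]`,
    -- supported on pairs `(b₁', b₂')` with `|b₂'| < |b₂|`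
    ∀ (i : ιM) (j : ιN) (p : ιM × ιN),
      (bM.tensorProduct bN).repr (Ψ (bM i ⊗ₜ[Fq] bN j) - bM i ⊗ₜ[Fq] bN j) p ∈ LaurentZ ∧
      ((bM.tensorProduct bN).repr (Ψ (bM i ⊗ₜ[Fq] bN j) - bM i ⊗ₜ[Fq] bN j) p ≠ 0 →
        wtLT (wtN p.2) (wtN j)) := by
  classical
  intro i j p
  set x := bM i ⊗ₜ[Fq] bN j
  have hfin : Function.HasFiniteSupport fun μ => Θi μ x := hΘi_fin x
  set S := hfin.toFinset.erase 0
  have hdiff : Ψ x - x = ∑ μ ∈ S, Θi μ x := by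
    rw [hΨ, hψMN, hψM_fix, hψN_fix, ← add_finsum_cond_ne 0 hfin, hΘi_zero,
      finsum_cond_ne _ _ hfin, LinearMap.id_apply, add_sub_cancel_left]
  have hcoeff : (bM.tensorProduct bN).repr (Ψ x - x) p =
      ∑ μ ∈ S, (bM.tensorProduct bN).repr (Θi μ x) p := by
    rw [hdiff, map_sum, Finsupp.finsetSum_apply]
  rw [hcoeff]
  refine ⟨Subring.sum_mem _ fun μ _ => hΘi_int μ i j p, fun hne => ?_⟩
  obtain ⟨μ, hμS, hμp⟩ := Finset.exists_ne_zero_of_sum_ne_zero hne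
  have hμ0 : μ ≠ 0 := Finset.ne_of_mem_erase hμS
  have hμ_nonneg : ∀ k, 0 ≤ μ k := by
    by_contra h
    exact hμp (by rw [hΘi_pos μ h, LinearMap.zero_apply, map_zero, Finsupp.zero_apply])
  have hwt : wtN p.2 = wtN j + μ :=
    (Module.Basis.mem_span_tmul_iff_repr_ne_zero bM bN _).mp (hΘi_wt μ hμ0 i j) p hμp
  exact hwt ▸ wtLT_add_self hμ_nonneg hμ0

theorem statement_7
    -- the weight lattice `X = ℤ𝕀` of the root datum `(𝕀, ·)` of finite type
    (I : Type) [Fintype I]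
    -- a based `U^ι`-module `(M, B^ι)` and a finite-dimensional based `U`-module `(N, B)`
    (ιM ιN : Type) [Finite ιM] [Finite ιN]
    (M N : Type) [AddCommGroup M] [Module Fq M] [AddCommGroup N] [Module Fq N]
    (bM : Module.Basis ιM Fq M) (bN : Module.Basis ιN Fq N)
    -- the bar involution of `ℚ(q)`, `q ↦ q⁻¹`
    (bar : Fq ≃+* Fq) (hbarq : bar qq = qq⁻¹) (hbar_invol : ∀ x, bar (bar x) = x)
    -- the `U`-weights of the members of the basis `B` of `N`
    (wtN : ιN → I →₀ ℤ)
    -- the bar involution `ψ_ι` of `M`, fixing `B^ι`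
    (ψM : M → M) (hψM_add : ∀ x y, ψM (x + y) = ψM x + ψM y)
    (hψM_smul : ∀ (c : Fq) (x : M), ψM (c • x) = bar c • ψM x)
    (hψM_fix : ∀ i, ψM (bM i) = bM i)
    -- the bar involution `ψ` of `N`, fixing `B`
    (ψN : N → N) (hψN_add : ∀ x y, ψN (x + y) = ψN x + ψN y)
    (hψN_smul : ∀ (c : Fq) (x : N), ψN (c • x) = bar c • ψN x)
    (hψN_fix : ∀ j, ψN (bN j) = bN j)
    -- the map `ψ_ι ⊗ ψ` on `M ⊗ N`
    (ψMN : M ⊗[Fq] N → M ⊗[Fq] N)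
    (hψMN_add : ∀ x y, ψMN (x + y) = ψMN x + ψMN y)
    (hψMN : ∀ (m : M) (n : N), ψMN (m ⊗ₜ[Fq] n) = ψM m ⊗ₜ[Fq] ψN n)
    -- the action on `M ⊗ N` of the components `Θ^ι_μ ∈ U^ι ⊗ U⁺_μ` of
    -- `Θ^ι = Δ(Υ)·Θ·(Υ⁻¹ ⊗ id)`
    (Θi : (I →₀ ℤ) → (M ⊗[Fq] N →ₗ[Fq] M ⊗[Fq] N))
    (hΘi_zero : Θi 0 = LinearMap.id)
    (hΘi_pos : ∀ μ : I →₀ ℤ, (¬ ∀ i, 0 ≤ μ i) → Θi μ = 0)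
    -- `Θ^ι_μ ∈ U^ι ⊗ U⁺_μ`: it raises the `N`-weight exactly by `μ`
    (hΘi_wt : ∀ μ : I →₀ ℤ, μ ≠ 0 → ∀ (i : ιM) (j : ιN),
      Θi μ (bM i ⊗ₜ[Fq] bN j) ∈ Submodule.span Fq
        {z : M ⊗[Fq] N | ∃ i' j', wtN j' = wtN j + μ ∧ z = bM i' ⊗ₜ[Fq] bN j'})
    -- integrality of `Θ^ι_μ`
    (hΘi_int : ∀ (μ : I →₀ ℤ) (i : ιM) (j : ιN) (p : ιM × ιN),
      (bM.tensorProduct bN).repr (Θi μ (bM i ⊗ₜ[Fq] bN j)) p ∈ LaurentZ)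
    (hΘi_fin : ∀ x : M ⊗[Fq] N, {μ : I →₀ ℤ | Θi μ x ≠ 0}.Finite)
    -- the new bar involution `ψ_ι := Θ^ι ∘ (ψ_ι ⊗ ψ)` on `M ⊗ N`
    (Ψ : M ⊗[Fq] N → M ⊗[Fq] N)
    (hΨ : ∀ x, Ψ x = ∑ᶠ μ : I →₀ ℤ, Θi μ (ψMN x))
    (hΨ_invol : ∀ x, Ψ (Ψ x) = x) :
    -- conclusion: `ψ_ι(b₁ ⊗ b₂) - b₁ ⊗ b₂` has coefficients in `ℤ[q,q⁻¹]`,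
    -- supported on pairs `(b₁', b₂')` with `|b₂'| < |b₂|`
    ∀ (i : ιM) (j : ιN) (p : ιM × ιN),
      (bM.tensorProduct bN).repr (Ψ (bM i ⊗ₜ[Fq] bN j) - bM i ⊗ₜ[Fq] bN j) p ∈ LaurentZ ∧
      ((bM.tensorProduct bN).repr (Ψ (bM i ⊗ₜ[Fq] bN j) - bM i ⊗ₜ[Fq] bN j) p ≠ 0 →
        wtLT (wtN p.2) (wtN j)) :=
  statement_7_general I ιM ιN M N bM bN wtN ψM hψM_fix ψN hψN_fix ψMN hψMN Θi hΘi_zero hΘi_pos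
    hΘi_wt hΘi_int hΘi_fin Ψ hΨ

end
end
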